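/- Let f₂ : ℝ → ℝ be defined by f₂(λ) := λ² for λ ≥ 0 and f₂(λ) := 0 for λ < 0. Let ρ1 be a density matrix and ρ2 a positive definite density matrix of the same finite size, and let T0 be the Hermitian matrix solving the Lyapunov equation (T0·ρ2 + ρ2·T0)/4 = ρ1 (explicitly, T0 = 4∫_{−∞}^0 e^{sρ2} ρ1 e^{sρ2} ds). Then T0 ≥ 0 and D_{f₂}^min(ρ1‖ρ2) = (1/4)·tr(ρ2·T0²) = (1/2)·tr(ρ1·T0). -/

import Mathlib

/-!
For a POVM element `M` write `p = tr ρ₁M` and `q = tr ρ₂M`. By the Lyapunov equation,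
`tr((T₀ - s)ρ₂(T₀ - s)M) = tr(T₀ρ₂T₀M) - 4sp + s²q` is nonnegative for every real `s`, and its
discriminant gives `p²/q ≤ tr(T₀ρ₂T₀M)/4`; summing over the POVM bounds `D_{f₂}^min` by
`tr(T₀ρ₂T₀)/4`. Measuring in an eigenbasis of `T₀` attains the bound: on an eigenvector of `T₀`
with eigenvalue `t` the Lyapunov equation gives `p = tq/2`, which together with `p ≥ 0` and
`q > 0` also forces `t ≥ 0`.
-/

open Filter Matrix
open scoped ComplexOrder
open scoped BigOperators

noncomputable section

attribute [local instance] Classical.propDecidable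

/-- The effective domain of an extended-real-valued function. -/
def edom (f : ℝ → EReal) : Set ℝ := {x | f x < ⊤}

/-- The convex conjugate `f*`(t) = sup_λ (t·λ − f(λ)). -/
def econj (f : ℝ → EReal) (t : ℝ) : EReal := ⨆ l : ℝ, ((t * l : ℝ) : EReal) - f l

/-- The function `g` associated to `f`, i.e. the lsc positively homogeneous
extension of `(λ1,λ2) ↦ λ2 f(λ1/λ2)`. -/
def gfun (f : ℝ → EReal) (l1 l2 : ℝ) : EReal :=
  if l1 = 0 ∧ l2 = 0 then 0
  else if l1 ∈ edom f ∧ 0 < l2 then ((l2 : ℝ) : EReal) * f (l1 / l2)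
  else if l1 ∈ edom f ∧ l2 = 0 then
    limUnder (nhdsWithin 0 (Set.Ioi 0)) fun u : ℝ => ((u : ℝ) : EReal) * f (l1 / u)
  else ⊤

/-- A finite-outcome POVM. -/
def IsPOVM {n m : ℕ} (M : Fin m → Matrix (Fin n) (Fin n) ℂ) : Prop :=
  (∀ x, (M x).PosSemidef) ∧ ∑ x, M x = 1

/-- The maximized measured f-divergence `D_f^min`. -/
def Dfmin (f : ℝ → EReal) {n : ℕ} (ρ1 ρ2 : Matrix (Fin n) (Fin n) ℂ) : EReal :=
  ⨆ (m : ℕ) (M : Fin m → Matrix (Fin n) (Fin n) ℂ) (_ : IsPOVM M),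
    ∑ x, gfun f ((ρ1 * M x).trace.re) ((ρ2 * M x).trace.re)

/-- Functional calculus on a Hermitian matrix: apply `h` to the eigenvalues. -/
def hermFC {k : ℕ} (h : ℝ → ℝ) {A : Matrix (Fin k) (Fin k) ℂ} (hA : A.IsHermitian) :
    Matrix (Fin k) (Fin k) ℂ :=
  (hA.eigenvectorUnitary : Matrix (Fin k) (Fin k) ℂ) *
    Matrix.diagonal (fun i => (h (hA.eigenvalues i) : ℂ)) *
    (star (hA.eigenvectorUnitary : Matrix (Fin k) (Fin k) ℂ))

/-- The spectrum of the Hermitian matrix `A` is contained in `S`. -/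
def specIn {k : ℕ} {A : Matrix (Fin k) (Fin k) ℂ} (hA : A.IsHermitian) (S : Set ℝ) : Prop :=
  ∀ i, hA.eigenvalues i ∈ S

/-- The Loewner order: `A ≤ B`. -/
def Loewner {k : ℕ} (A B : Matrix (Fin k) (Fin k) ℂ) : Prop := (B - A).PosSemidef

/-- Operator convexity of a real function on a set `S` (midpoint form, via
the functional calculus on Hermitian matrices with spectrum in `S`). -/
def OpConvexOn (h : ℝ → ℝ) (S : Set ℝ) : Prop :=
  ∀ (k : ℕ), 1 ≤ k → ∀ (A B : Matrix (Fin k) (Fin k) ℂ)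
    (hA : A.IsHermitian) (hB : B.IsHermitian) (hM : ((1/2 : ℂ) • (A + B)).IsHermitian),
    specIn hA S → specIn hB S →
    Loewner (hermFC h hM) ((1/2 : ℂ) • (hermFC h hA + hermFC h hB))

/-- The real-valued version of the convex conjugate of `f` (used for the
functional calculus; on `dom f*` it agrees with `f*` when `f` is proper). -/
def econjR (f : ℝ → EReal) (t : ℝ) : ℝ := (econj f t).toReal

/-- Condition (I): `f*` is operator convex on its effective domain. -/
def CondI (f : ℝ → EReal) : Prop := OpConvexOn (econjR f) (edom (econj f))

/-- `f` is a proper lower semicontinuous convex function with `dom f ⊇ (0,∞)`. -/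
structure NiceF (f : ℝ → EReal) : Prop where
  ne_bot : ∀ x, f x ≠ ⊥
  ne_top : ∃ x, f x ≠ ⊤
  lsc : LowerSemicontinuous f
  convex : ∀ x y a b : ℝ, 0 ≤ a → 0 ≤ b → a + b = 1 →
    f (a * x + b * y) ≤ ((a : ℝ) : EReal) * f x + ((b : ℝ) : EReal) * f y
  dom : Set.Ioi (0 : ℝ) ⊆ edom f

/-- `f₂(λ) = λ²` for `λ ≥ 0`, `f₂(λ) = 0` for `λ < 0`. -/
def ftwo : ℝ → EReal := fun l => (((if 0 ≤ l then l ^ 2 else 0) : ℝ) : EReal)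

open scoped MatrixOrder in
theorem Matrix.PosSemidef.trace_mul_nonneg {𝕜 n : Type*} [RCLike 𝕜] [Fintype n]
    {A B : Matrix n n 𝕜} (hA : A.PosSemidef) (hB : B.PosSemidef) : 0 ≤ (A * B).trace := by
  have hS : (CFC.sqrt A).IsHermitian := (CFC.sqrt_nonneg A).posSemidef.isHermitian
  calc (0 : 𝕜) ≤ (CFC.sqrt A * B * (CFC.sqrt A)ᴴ).trace :=
        (hB.mul_mul_conjTranspose_same _).trace_nonneg
    _ = (A * B).trace := by
        rw [hS.eq, trace_mul_cycle, CFC.sqrt_mul_sqrt_self A hA.nonneg]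

namespace Matrix.IsHermitian

variable {𝕜 n : Type*} [RCLike 𝕜] [Fintype n] [DecidableEq n] {A : Matrix n n 𝕜}
  (hA : A.IsHermitian)

def eigenProj (i : n) : Matrix n n 𝕜 :=
  vecMulVec ⇑(hA.eigenvectorBasis i) (star ⇑(hA.eigenvectorBasis i))

theorem posSemidef_eigenProj (i : n) : (hA.eigenProj i).PosSemidef :=
  posSemidef_vecMulVec_self_star _

theorem sum_eigenProj : ∑ i, hA.eigenProj i = 1 := by
  have h := Unitary.coe_mul_star_self hA.eigenvectorUnitary
  ext j k
  simpa [eigenProj, Matrix.sum_apply, vecMulVec_apply, Matrix.mul_apply, star_apply] using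
    congrFun (congrFun h j) k

theorem mul_eigenProj (i : n) : A * hA.eigenProj i = (hA.eigenvalues i : 𝕜) • hA.eigenProj i := by
  rw [eigenProj, mul_vecMulVec, mulVec_eigenvectorBasis, RCLike.real_smul_eq_coe_smul (K := 𝕜),
    smul_vecMulVec]

theorem eigenProj_mul (i : n) : hA.eigenProj i * A = (hA.eigenvalues i : 𝕜) • hA.eigenProj i := by
  have h := congrArg (·ᴴ) (hA.mul_eigenProj i)
  rwa [conjTranspose_mul, hA.eq, conjTranspose_smul, RCLike.star_def, RCLike.conj_ofReal,
    (hA.posSemidef_eigenProj i).isHermitian.eq] at h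

theorem trace_mul_eigenProj (B : Matrix n n 𝕜) (i : n) :
    (B * hA.eigenProj i).trace =
      star ⇑(hA.eigenvectorBasis i) ⬝ᵥ (B *ᵥ ⇑(hA.eigenvectorBasis i)) := by
  rw [eigenProj, mul_vecMulVec, trace_vecMulVec, dotProduct_comm]

theorem re_trace_mul_eigenProj_pos {B : Matrix n n 𝕜} (hB : B.PosDef) (i : n) :
    0 < RCLike.re (B * hA.eigenProj i).trace := by
  have hv : ⇑(hA.eigenvectorBasis i) ≠ 0 := fun h =>
    hA.eigenvectorBasis.orthonormal.ne_zero i (by simpa using congrArg (WithLp.toLp 2) h)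
  rw [hA.trace_mul_eigenProj]
  exact (RCLike.pos_iff.mp (hB.dotProduct_mulVec_pos hv)).1

end Matrix.IsHermitian

theorem Matrix.trace_conj_mul_of_mul_eq_smul {n : Type*} [Fintype n] {T P : Matrix n n ℂ} {t : ℂ}
    (ρ : Matrix n n ℂ) (hTP : T * P = t • P) (hPT : P * T = t • P) :
    (T * ρ * T * P).trace = t ^ 2 * (ρ * P).trace := by
  rw [Matrix.mul_assoc, hTP, Matrix.mul_smul, trace_smul, trace_mul_cycle, hPT, Matrix.smul_mul,
    trace_smul, trace_mul_comm, smul_eq_mul, smul_eq_mul]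
  ring

section Lyapunov

variable {n : Type*} [Fintype n] {ρ₁ ρ₂ T : Matrix n n ℂ}

theorem trace_mul_of_lyapunov_of_mul_eq_smul (hLyap : (1/4 : ℂ) • (T * ρ₂ + ρ₂ * T) = ρ₁)
    {P : Matrix n n ℂ} {t : ℂ} (hTP : T * P = t • P) (hPT : P * T = t • P) :
    (ρ₁ * P).trace = t / 2 * (ρ₂ * P).trace := by
  have h₁ : (T * ρ₂ * P).trace = t * (ρ₂ * P).trace := by
    rw [trace_mul_cycle, hPT, Matrix.smul_mul, trace_smul, smul_eq_mul, trace_mul_comm]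
  have h₂ : (ρ₂ * T * P).trace = t * (ρ₂ * P).trace := by
    rw [Matrix.mul_assoc, hTP, Matrix.mul_smul, trace_smul, smul_eq_mul]
  rw [← hLyap, Matrix.smul_mul, trace_smul, Matrix.add_mul, trace_add, h₁, h₂, smul_eq_mul]
  ring

theorem re_trace_mul_self_of_lyapunov (hLyap : (1/4 : ℂ) • (T * ρ₂ + ρ₂ * T) = ρ₁) :
    (ρ₁ * T).trace.re = (T * ρ₂ * T).trace.re / 2 := by
  rw [← hLyap, Matrix.smul_mul, Matrix.add_mul, trace_smul, trace_add, trace_mul_cycle ρ₂ T T]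
  simp [Complex.mul_re]
  ring

theorem four_mul_sq_re_trace_le_of_lyapunov [DecidableEq n]
    (hLyap : (1/4 : ℂ) • (T * ρ₂ + ρ₂ * T) = ρ₁) (hT : T.IsHermitian) (hρ₂ : ρ₂.PosSemidef)
    {M : Matrix n n ℂ} (hM : M.PosSemidef) :
    4 * (ρ₁ * M).trace.re ^ 2 ≤ (ρ₂ * M).trace.re * (T * ρ₂ * T * M).trace.re := by
  have hsum : T * ρ₂ + ρ₂ * T = (4 : ℂ) • ρ₁ := by
    rw [← hLyap, smul_smul]; norm_num
  have hquad : ∀ s : ℝ, 0 ≤ (ρ₂ * M).trace.re * (s * s) + (-4 * (ρ₁ * M).trace.re) * s +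
      (T * ρ₂ * T * M).trace.re := by
    intro s
    set S := T - (s : ℂ) • 1
    have hS : Sᴴ = S := by
      simp [S, conjTranspose_sub, hT.eq, conjTranspose_smul]
    have hexp : S * ρ₂ * Sᴴ = T * ρ₂ * T - (s : ℂ) • (T * ρ₂ + ρ₂ * T) + ((s : ℂ) * s) • ρ₂ := by
      rw [hS]
      simp only [S, sub_mul, mul_sub, Matrix.smul_mul, Matrix.mul_smul, Matrix.one_mul,
        Matrix.mul_one, smul_add, smul_smul]
      abel
    have h := (hρ₂.mul_mul_conjTranspose_same S).trace_mul_nonneg hM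
    rw [hexp, hsum] at h
    have h' := (Complex.nonneg_iff.mp h).1
    simp only [add_mul, sub_mul, Matrix.smul_mul, trace_add, trace_sub, trace_smul, smul_eq_mul,
      Complex.add_re, Complex.sub_re, Complex.re_ofReal_mul] at h'
    simp only [Complex.mul_re, Complex.ofReal_re, Complex.ofReal_im] at h'
    norm_num at h'
    linarith
  have := discrim_le_zero hquad
  rw [discrim] at this
  linarith

variable [DecidableEq n]

theorem re_trace_mul_eigenProj_of_lyapunov (hLyap : (1/4 : ℂ) • (T * ρ₂ + ρ₂ * T) = ρ₁)
    (hT : T.IsHermitian) (i : n) :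
    (ρ₁ * hT.eigenProj i).trace.re = hT.eigenvalues i / 2 * (ρ₂ * hT.eigenProj i).trace.re := by
  rw [trace_mul_of_lyapunov_of_mul_eq_smul hLyap (hT.mul_eigenProj i) (hT.eigenProj_mul i)]
  simp [Complex.mul_re]

theorem posSemidef_of_lyapunov (hLyap : (1/4 : ℂ) • (T * ρ₂ + ρ₂ * T) = ρ₁)
    (hT : T.IsHermitian) (hρ₁ : ρ₁.PosSemidef) (hρ₂ : ρ₂.PosDef) : T.PosSemidef := by
  refine hT.posSemidef_iff_eigenvalues_nonneg.mpr fun i => show (0 : ℝ) ≤ _ from ?_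
  have hp : 0 ≤ (ρ₁ * hT.eigenProj i).trace.re :=
    (Complex.nonneg_iff.mp (hρ₁.trace_mul_nonneg (hT.posSemidef_eigenProj i))).1
  have hq : 0 < (ρ₂ * hT.eigenProj i).trace.re := hT.re_trace_mul_eigenProj_pos hρ₂ i
  rw [re_trace_mul_eigenProj_of_lyapunov hLyap hT] at hp
  linarith [(mul_nonneg_iff_of_pos_right hq).mp hp]

end Lyapunov

theorem EReal.coe_finset_sum {ι : Type*} (s : Finset ι) (f : ι → ℝ) :
    ((∑ x ∈ s, f x : ℝ) : EReal) = ∑ x ∈ s, (f x : EReal) :=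
  map_sum (⟨⟨Real.toEReal, EReal.coe_zero⟩, EReal.coe_add⟩ : ℝ →+ EReal) f s

theorem gfun_ftwo_of_pos {p q : ℝ} (hp : 0 ≤ p) (hq : 0 < q) :
    gfun ftwo p q = ((p ^ 2 / q : ℝ) : EReal) := by
  have hdom : p ∈ edom ftwo := EReal.coe_lt_top _
  rw [gfun, if_neg (fun h => hq.ne' h.2), if_pos ⟨hdom, hq⟩, ftwo, if_pos (div_nonneg hp hq.le),
    ← EReal.coe_mul]
  congr 1
  field_simp

theorem gfun_ftwo_le {p q c : ℝ} (hp : 0 ≤ p) (hq : 0 ≤ q) (hc : 0 ≤ c) (h : p ^ 2 ≤ q * c) :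
    gfun ftwo p q ≤ c := by
  rcases hq.eq_or_lt with rfl | hq
  · have hp0 : p = 0 := by nlinarith
    rw [hp0, gfun, if_pos ⟨rfl, rfl⟩]
    exact EReal.coe_nonneg.mpr hc
  · rw [gfun_ftwo_of_pos hp hq, EReal.coe_le_coe_iff, div_le_iff₀ hq]
    linarith

theorem IsPOVM.sum_re_trace_mul {n m : ℕ} {M : Fin m → Matrix (Fin n) (Fin n) ℂ} (hM : IsPOVM M)
    (A : Matrix (Fin n) (Fin n) ℂ) : ∑ x, (A * M x).trace.re = A.trace.re := by
  rw [← Complex.re_sum, ← trace_sum, ← Finset.mul_sum, hM.2, Matrix.mul_one]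

theorem Matrix.IsHermitian.isPOVM_eigenProj {n : ℕ} {A : Matrix (Fin n) (Fin n) ℂ}
    (hA : A.IsHermitian) : IsPOVM hA.eigenProj :=
  ⟨hA.posSemidef_eigenProj, hA.sum_eigenProj⟩

section MeasuredDivergence

variable {n : ℕ} {ρ₁ ρ₂ T : Matrix (Fin n) (Fin n) ℂ}

theorem sum_gfun_ftwo_le_of_lyapunov (hLyap : (1/4 : ℂ) • (T * ρ₂ + ρ₂ * T) = ρ₁)
    (hT : T.IsHermitian) (hρ₁ : ρ₁.PosSemidef) (hρ₂ : ρ₂.PosSemidef) {m : ℕ}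
    {M : Fin m → Matrix (Fin n) (Fin n) ℂ} (hM : IsPOVM M) :
    ∑ x, gfun ftwo (ρ₁ * M x).trace.re (ρ₂ * M x).trace.re ≤
      ((1/4 * (T * ρ₂ * T).trace.re : ℝ) : EReal) := by
  have hK : (T * ρ₂ * T).PosSemidef := by
    simpa [hT.eq] using hρ₂.mul_mul_conjTranspose_same T
  have re_nonneg : ∀ {A : Matrix (Fin n) (Fin n) ℂ}, A.PosSemidef → ∀ x, 0 ≤ (A * M x).trace.re :=
    fun hA x => (Complex.nonneg_iff.mp (hA.trace_mul_nonneg (hM.1 x))).1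
  calc ∑ x, gfun ftwo (ρ₁ * M x).trace.re (ρ₂ * M x).trace.re
      ≤ ∑ x, ((1/4 * (T * ρ₂ * T * M x).trace.re : ℝ) : EReal) :=
        Finset.sum_le_sum fun x _ => gfun_ftwo_le (re_nonneg hρ₁ x) (re_nonneg hρ₂ x)
          (by linarith [re_nonneg hK x])
          (by linarith [four_mul_sq_re_trace_le_of_lyapunov hLyap hT hρ₂ (hM.1 x)])
    _ = ((1/4 * (T * ρ₂ * T).trace.re : ℝ) : EReal) := by
        rw [← EReal.coe_finset_sum, ← Finset.mul_sum, hM.sum_re_trace_mul]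

theorem sum_gfun_ftwo_eigenProj_of_lyapunov (hLyap : (1/4 : ℂ) • (T * ρ₂ + ρ₂ * T) = ρ₁)
    (hT : T.IsHermitian) (hρ₁ : ρ₁.PosSemidef) (hρ₂ : ρ₂.PosDef) :
    ∑ i, gfun ftwo (ρ₁ * hT.eigenProj i).trace.re (ρ₂ * hT.eigenProj i).trace.re =
      ((1/4 * (T * ρ₂ * T).trace.re : ℝ) : EReal) := by
  have ht := (posSemidef_of_lyapunov hLyap hT hρ₁ hρ₂).eigenvalues_nonneg
  have hterm : ∀ i, gfun ftwo (ρ₁ * hT.eigenProj i).trace.re (ρ₂ * hT.eigenProj i).trace.re =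
      ((1/4 * (T * ρ₂ * T * hT.eigenProj i).trace.re : ℝ) : EReal) := fun i => by
    have hq : 0 < (ρ₂ * hT.eigenProj i).trace.re := hT.re_trace_mul_eigenProj_pos hρ₂ i
    rw [re_trace_mul_eigenProj_of_lyapunov hLyap hT,
      gfun_ftwo_of_pos (mul_nonneg (by linarith [ht i]) hq.le) hq,
      trace_conj_mul_of_mul_eq_smul ρ₂ (hT.mul_eigenProj i) (hT.eigenProj_mul i)]
    congr 1
    simp [Complex.mul_re, ← Complex.ofReal_pow]
    field_simp
    ring
  rw [Finset.sum_congr rfl fun i _ => hterm i, ← EReal.coe_finset_sum, ← Finset.mul_sum,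
    hT.isPOVM_eigenProj.sum_re_trace_mul]

theorem Dfmin_ftwo_eq_of_lyapunov (hLyap : (1/4 : ℂ) • (T * ρ₂ + ρ₂ * T) = ρ₁)
    (hT : T.IsHermitian) (hρ₁ : ρ₁.PosSemidef) (hρ₂ : ρ₂.PosDef) :
    Dfmin ftwo ρ₁ ρ₂ = ((1/4 * (T * ρ₂ * T).trace.re : ℝ) : EReal) :=
  le_antisymm
    (iSup_le fun _ => iSup₂_le fun _ hM =>
      sum_gfun_ftwo_le_of_lyapunov hLyap hT hρ₁ hρ₂.posSemidef hM)
    ((sum_gfun_ftwo_eigenProj_of_lyapunov hLyap hT hρ₁ hρ₂).symm.le.trans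
      (le_iSup_of_le n (le_iSup₂_of_le hT.eigenProj hT.isPOVM_eigenProj le_rfl)))

end MeasuredDivergence

theorem stmt_13_general {n : ℕ} (ρ1 ρ2 : Matrix (Fin n) (Fin n) ℂ)
    (h1 : ρ1.PosSemidef) (h2 : ρ2.PosDef)
    (T0 : Matrix (Fin n) (Fin n) ℂ) (hT0 : T0.IsHermitian)
    (hLyap : (1/4 : ℂ) • (T0 * ρ2 + ρ2 * T0) = ρ1) :
    T0.PosSemidef ∧
    Dfmin ftwo ρ1 ρ2 = (((1/4 : ℝ) * (ρ2 * (T0 * T0)).trace.re : ℝ) : EReal) ∧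
    Dfmin ftwo ρ1 ρ2 = (((1/2 : ℝ) * (ρ1 * T0).trace.re : ℝ) : EReal) := by
  have hD := Dfmin_ftwo_eq_of_lyapunov hLyap hT0 h1 h2
  refine ⟨posSemidef_of_lyapunov hLyap hT0 h1 h2, ?_, ?_⟩
  · rw [hD, trace_mul_cycle, trace_mul_comm]
  · rw [hD, re_trace_mul_self_of_lyapunov hLyap]
    congr 1
    ring

/-- closed formula for `D_{f₂}^min` via the solution `T0` of the
Lyapunov equation `(T0 ρ2 + ρ2 T0)/4 = ρ1`. -/
theorem stmt_13 {n : ℕ} (ρ1 ρ2 : Matrix (Fin n) (Fin n) ℂ)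
    (h1 : ρ1.PosSemidef) (h1t : ρ1.trace = 1) (h2 : ρ2.PosDef) (h2t : ρ2.trace = 1)
    (T0 : Matrix (Fin n) (Fin n) ℂ) (hT0 : T0.IsHermitian)
    (hLyap : (1/4 : ℂ) • (T0 * ρ2 + ρ2 * T0) = ρ1) :
    T0.PosSemidef ∧
    Dfmin ftwo ρ1 ρ2 = (((1/4 : ℝ) * (ρ2 * (T0 * T0)).trace.re : ℝ) : EReal) ∧
    Dfmin ftwo ρ1 ρ2 = (((1/2 : ℝ) * (ρ1 * T0).trace.re : ℝ) : EReal) :=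
  stmt_13_general ρ1 ρ2 h1 h2 T0 hT0 hLyap
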